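/- Suppose F2 is atomless conditionally to F1. Then there exists an increasing family of sets (B_t)_{t ∈ [0,1]} in F2 (i.e., B_s ⊆ B_t for s ≤ t) with B_0 = ∅, B_1 = Ω, such that for every t ∈ [0,1], E[1_{B_t} | F1] = t almost surely. Moreover the σ-algebra B generated by the family (B_t)_{t ∈ [0,1]} is independent of F1. -/

import Mathlib

/-!
Conditional atomlessness lets one split off from any set `A` a piece carrying at most half of
its conditional mass, hence pieces of arbitrarily small but positive conditional mass. Among the
sets `B ⊆ A` with `E[1_B | F1] ≤ r` (for `F1`-measurable `0 ≤ r ≤ E[1_A | F1]`) a maximal one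
exists by the Brézis–Browder principle, since increasing unions stay in the family by
conditional monotone convergence; if it missed `r` on a non-null set, adding a small piece
there would contradict maximality, so `E[1_B | F1] = r`. Interpolating between consecutive
sets in this way yields refining dyadic chains with `E[1_{C n k} | F1] = k / 2 ^ n`, and
`B t = ⋃ n, C n ⌊t 2 ^ n⌋` has `E[1_{B t} | F1] = t`. Constant conditional probabilities mean
`P (B t ∩ G) = t P G` for `G ∈ F1`, and the chain `(B t)` is a π-system, whence independence.
-/

open MeasureTheory ProbabilityTheory Set
open scoped ENNReal

/-- The conditional expectation (under `P`, defined on `F2`) of the indicator of `A`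
given the sub-σ-algebra `F1`. -/
noncomputable def cexpInd {Ω : Type*} (F1 F2 : MeasurableSpace Ω) (P : @Measure Ω F2)
    (A : Set Ω) : Ω → ℝ :=
  P[A.indicator (fun _ => (1 : ℝ)) | F1]

/-- `F2` is atomless conditionally to `F1`: for every `A ∈ F2` there is `B ∈ F2`, `B ⊆ A`,
with `0 < E[1_B | F1] < E[1_A | F1]` almost surely on the set `{E[1_A | F1] > 0}`. -/
def CondAtomless {Ω : Type*} (F1 F2 : MeasurableSpace Ω) (P : @Measure Ω F2) : Prop :=
  ∀ A : Set Ω, MeasurableSet[F2] A → ∃ B : Set Ω, MeasurableSet[F2] B ∧ B ⊆ A ∧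
    ∀ᵐ ω ∂P, 0 < cexpInd F1 F2 P A ω →
      0 < cexpInd F1 F2 P B ω ∧ cexpInd F1 F2 P B ω < cexpInd F1 F2 P A ω

open Filter Topology

section Order

variable {α : Type*}

-- Brézis–Browder ordering principle
theorem exists_maximal_of_seq_bounded [Preorder α] {G : Set α} (v : α → ℝ) (hv : Monotone v)
    (hbdd : BddAbove (v '' G)) (hne : G.Nonempty)
    (hseq : ∀ M : ℕ → α, Monotone M → (∀ k, M k ∈ G) → ∃ b ∈ G, ∀ k, M k ≤ b) :
    ∃ m ∈ G, ∀ x ∈ G, m ≤ x → v x ≤ v m := by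
  let above (a : α) : Set ℝ := v '' {x ∈ G | a ≤ x}
  have hnext : ∀ (k : ℕ), ∀ a ∈ G, ∃ b ∈ G, a ≤ b ∧ sSup (above a) < v b + 1 / (k + 1) := by
    intro k a ha
    have hmem : v a ∈ above a := ⟨a, ⟨ha, le_rfl⟩, rfl⟩
    obtain ⟨_, ⟨b, ⟨hbG, hab⟩, rfl⟩, hb⟩ := exists_lt_of_lt_csSup ⟨_, hmem⟩
      (sub_lt_self (sSup (above a)) (Nat.one_div_pos_of_nat (n := k)))
    exact ⟨b, hbG, hab, by linarith⟩
  choose next hnextG hnext_ge hnext_sup using hnext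
  obtain ⟨a₀, ha₀⟩ := hne
  let M : ℕ → {a // a ∈ G} := fun k =>
    Nat.rec ⟨a₀, ha₀⟩ (fun k a => ⟨next k a.1 a.2, hnextG k a.1 a.2⟩) k
  have hM : Monotone fun k => (M k).1 := monotone_nat_of_le_succ fun k => hnext_ge k _ _
  obtain ⟨m, hmG, hMm⟩ := hseq _ hM fun k => (M k).2
  refine ⟨m, hmG, fun x hxG hmx => le_of_forall_pos_lt_add fun ε hε => ?_⟩
  obtain ⟨k, hk⟩ := exists_nat_one_div_lt hε
  have hx_le : v x ≤ sSup (above (M k).1) :=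
    le_csSup (hbdd.mono (image_mono fun y hy => hy.1)) ⟨x, ⟨hxG, (hMm k).trans hmx⟩, rfl⟩
  have hstep := hnext_sup k (M k).1 (M k).2
  have hvm : v (M (k + 1)).1 ≤ v m := hv (hMm (k + 1))
  calc v x < v (M (k + 1)).1 + 1 / (k + 1) := hx_le.trans_lt hstep
    _ ≤ v m + ε := by linarith

def interleave (a b : ℕ → α) (k : ℕ) : α := if k % 2 = 0 then a (k / 2) else b (k / 2)

@[simp]
lemma interleave_two_mul (a b : ℕ → α) (j : ℕ) : interleave a b (2 * j) = a j := by
  simp [interleave]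

@[simp]
lemma interleave_two_mul_add_one (a b : ℕ → α) (j : ℕ) : interleave a b (2 * j + 1) = b j := by
  simp [interleave, Nat.add_mod, show (2 * j + 1) / 2 = j by omega]

lemma monotone_interleave [Preorder α] {a b : ℕ → α} (hab : ∀ j, a j ≤ b j)
    (hba : ∀ j, b j ≤ a (j + 1)) : Monotone (interleave a b) := by
  refine monotone_nat_of_le_succ fun k => ?_
  obtain ⟨j, rfl | rfl⟩ := Nat.even_or_odd' k
  · simpa using hab j
  · simpa [show 2 * j + 1 + 1 = 2 * (j + 1) by ring] using hba j

lemma isPiSystem_of_monotone [LinearOrder α] {β : Type*} {B : α → Set β} (hB : Monotone B)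
    (s : Set α) : IsPiSystem {S | ∃ t ∈ s, S = B t} := by
  rintro _ ⟨t₁, ht₁, rfl⟩ _ ⟨t₂, ht₂, rfl⟩ -
  rcases le_total t₁ t₂ with h | h
  · exact ⟨t₁, ht₁, inter_eq_left.2 (hB h)⟩
  · exact ⟨t₂, ht₂, inter_eq_right.2 (hB h)⟩

end Order

section CexpInd

variable {Ω : Type*} {F1 F2 : MeasurableSpace Ω} {P : @Measure Ω F2} {A B G : Set Ω}

lemma cexpInd_nonneg (A : Set Ω) : 0 ≤ᵐ[P] cexpInd F1 F2 P A :=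
  condExp_nonneg (.of_forall fun _ => indicator_nonneg (fun _ _ => zero_le_one) _)

lemma stronglyMeasurable_cexpInd (A : Set Ω) : StronglyMeasurable[F1] (cexpInd F1 F2 P A) :=
  stronglyMeasurable_condExp

lemma integrable_cexpInd (A : Set Ω) : Integrable (cexpInd F1 F2 P A) P :=
  integrable_condExp

@[simp]
lemma cexpInd_empty : cexpInd F1 F2 P ∅ = 0 := by
  rw [cexpInd, indicator_empty', condExp_zero]

variable [IsFiniteMeasure P]

lemma cexpInd_univ (hle : F1 ≤ F2) : cexpInd F1 F2 P univ = 1 := by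
  simp only [cexpInd, indicator_univ]
  exact condExp_const hle 1

lemma cexpInd_mono (hA : MeasurableSet[F2] A) (hB : MeasurableSet[F2] B) (hAB : A ⊆ B) :
    cexpInd F1 F2 P A ≤ᵐ[P] cexpInd F1 F2 P B :=
  condExp_mono ((integrable_const 1).indicator hA) ((integrable_const 1).indicator hB)
    (.of_forall (indicator_le_indicator_of_subset hAB fun _ => zero_le_one))

lemma cexpInd_le_one (hle : F1 ≤ F2) (hA : MeasurableSet[F2] A) :
    cexpInd F1 F2 P A ≤ᵐ[P] 1 :=
  cexpInd_univ (P := P) hle ▸ cexpInd_mono hA .univ (subset_univ A)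

lemma cexpInd_union (hA : MeasurableSet[F2] A) (hB : MeasurableSet[F2] B) (hAB : Disjoint A B) :
    cexpInd F1 F2 P (A ∪ B) =ᵐ[P] cexpInd F1 F2 P A + cexpInd F1 F2 P B := by
  rw [cexpInd, indicator_union_of_disjoint hAB]
  exact condExp_add ((integrable_const 1).indicator hA) ((integrable_const 1).indicator hB) F1

lemma cexpInd_diff (hA : MeasurableSet[F2] A) (hB : MeasurableSet[F2] B) (hBA : B ⊆ A) :
    cexpInd F1 F2 P (A \ B) =ᵐ[P] cexpInd F1 F2 P A - cexpInd F1 F2 P B := by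
  filter_upwards [cexpInd_union (F1 := F1) (P := P) (hA.diff hB) hB disjoint_sdiff_left]
    with ω hω
  rw [sdiff_union_of_subset hBA] at hω
  simp [hω]

lemma cexpInd_inter (hA : MeasurableSet[F2] A) (hG : MeasurableSet[F1] G) :
    cexpInd F1 F2 P (A ∩ G) =ᵐ[P] G.indicator (cexpInd F1 F2 P A) := by
  rw [cexpInd, inter_comm, ← indicator_indicator]
  exact condExp_indicator ((integrable_const 1).indicator hA) hG

lemma setIntegral_cexpInd (hle : F1 ≤ F2) (hA : MeasurableSet[F2] A) (hG : MeasurableSet[F1] G) :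
    ∫ ω in G, cexpInd F1 F2 P A ω ∂P = P.real (A ∩ G) := by
  rw [cexpInd, setIntegral_condExp hle ((integrable_const 1).indicator hA) hG,
    setIntegral_indicator hA]
  simp [inter_comm]

lemma measure_inter_pos_of_cexpInd_pos (hle : F1 ≤ F2) (hB : MeasurableSet[F2] B)
    (hG : MeasurableSet[F1] G) (hG0 : P G ≠ 0) (hpos : ∀ᵐ ω ∂P, ω ∈ G → 0 < cexpInd F1 F2 P B ω) :
    0 < P (B ∩ G) := by
  have hsupp : G ≤ᵐ[P] (Function.support (cexpInd F1 F2 P B) ∩ G : Set Ω) := by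
    filter_upwards [hpos] with ω hω hωG
    exact ⟨(hω hωG).ne', hωG⟩
  have hint : 0 < ∫ ω in G, cexpInd F1 F2 P B ω ∂P :=
    (setIntegral_pos_iff_support_of_nonneg_ae (ae_restrict_of_ae (cexpInd_nonneg B))
      (integrable_cexpInd B).integrableOn).2
      ((pos_iff_ne_zero.2 hG0).trans_le (measure_mono_ae hsupp))
  rw [setIntegral_cexpInd hle hB hG] at hint
  exact (ENNReal.toReal_pos_iff.1 hint).1

lemma tendsto_cexpInd_iUnion (hle : F1 ≤ F2) {M : ℕ → Set Ω} (hM : ∀ k, MeasurableSet[F2] (M k))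
    (hmono : Monotone M) :
    ∀ᵐ ω ∂P, Tendsto (fun k => cexpInd F1 F2 P (M k) ω) atTop
      (𝓝 (cexpInd F1 F2 P (⋃ k, M k) ω)) := by
  have hU : MeasurableSet[F2] (⋃ k, M k) := .iUnion hM
  have hintegral : ∀ {A : Set Ω}, MeasurableSet[F2] A → ∫ ω, cexpInd F1 F2 P A ω ∂P = P.real A :=
    fun hA => by simpa using setIntegral_cexpInd (P := P) hle hA .univ
  refine tendsto_of_integral_tendsto_of_monotone (fun _ => integrable_cexpInd _)
    (integrable_cexpInd _) ?_ ?_ ?_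
  · simp only [hintegral (hM _), hintegral hU]
    exact (ENNReal.tendsto_toReal (measure_ne_top P _)).comp (tendsto_measure_iUnion_atTop hmono)
  · filter_upwards [ae_all_iff.2 fun k => cexpInd_mono (F1 := F1) (P := P) (hM k) (hM (k + 1))
      (hmono k.le_succ)] with ω hω
    exact monotone_nat_of_le_succ hω
  · exact ae_all_iff.2 fun k => cexpInd_mono (hM k) hU (subset_iUnion M k)

end CexpInd

section Atomless

variable {Ω : Type*} {F1 F2 : MeasurableSpace Ω} {P : @Measure Ω F2} [IsFiniteMeasure P]
  {A B C : Set Ω}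

lemma exists_cexpInd_eq_min (hle : F1 ≤ F2) (hB : MeasurableSet[F2] B) (hC : MeasurableSet[F2] C) :
    ∃ D, MeasurableSet[F2] D ∧ D ⊆ B ∪ C ∧
      cexpInd F1 F2 P D =ᵐ[P] fun ω => min (cexpInd F1 F2 P B ω) (cexpInd F1 F2 P C ω) := by
  set W := {ω | cexpInd F1 F2 P B ω ≤ cexpInd F1 F2 P C ω}
  have hW : MeasurableSet[F1] W := measurableSet_le (stronglyMeasurable_cexpInd B).measurable
    (stronglyMeasurable_cexpInd C).measurable
  have hdisj : Disjoint (B ∩ W) (C ∩ Wᶜ) :=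
    disjoint_left.2 fun _ hωB hωC => hωC.2 hωB.2
  refine ⟨B ∩ W ∪ C ∩ Wᶜ, (hB.inter (hle _ hW)).union (hC.inter (hle _ hW.compl)),
    union_subset_union inter_subset_left inter_subset_left, ?_⟩
  filter_upwards [cexpInd_union (F1 := F1) (P := P) (hB.inter (hle _ hW))
      (hC.inter (hle _ hW.compl)) hdisj, cexpInd_inter (P := P) hB hW,
    cexpInd_inter (P := P) hC hW.compl] with ω hD hBW hCW
  rw [hD, Pi.add_apply, hBW, hCW]
  by_cases hω : ω ∈ W
  · have hle' : cexpInd F1 F2 P B ω ≤ cexpInd F1 F2 P C ω := hω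
    simp [hω, hle']
  · have hlt : cexpInd F1 F2 P C ω < cexpInd F1 F2 P B ω := not_le.1 hω
    simp [hω, hlt.le]

lemma CondAtomless.exists_subset_cexpInd_le_half (hle : F1 ≤ F2) (hatom : CondAtomless F1 F2 P)
    (hA : MeasurableSet[F2] A) :
    ∃ B, MeasurableSet[F2] B ∧ B ⊆ A ∧ ∀ᵐ ω ∂P,
      (0 < cexpInd F1 F2 P A ω → 0 < cexpInd F1 F2 P B ω) ∧
        cexpInd F1 F2 P B ω ≤ cexpInd F1 F2 P A ω / 2 := by
  obtain ⟨B, hB, hBA, hBpos⟩ := hatom A hA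
  obtain ⟨D, hD, hDsub, hDmin⟩ := exists_cexpInd_eq_min (P := P) hle hB (hA.diff hB)
  refine ⟨D, hD, hDsub.trans (union_subset hBA sdiff_subset), ?_⟩
  filter_upwards [hDmin, hBpos, cexpInd_diff (F1 := F1) (P := P) hA hB hBA] with ω hmin hpos hdiff
  rw [hmin, hdiff, Pi.sub_apply]
  exact ⟨fun hA0 => lt_min (hpos hA0).1 (sub_pos.2 (hpos hA0).2), by
    linarith [min_le_left (cexpInd F1 F2 P B ω) (cexpInd F1 F2 P A ω - cexpInd F1 F2 P B ω),
      min_le_right (cexpInd F1 F2 P B ω) (cexpInd F1 F2 P A ω - cexpInd F1 F2 P B ω)]⟩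

lemma CondAtomless.exists_subset_cexpInd_le_div_pow (hle : F1 ≤ F2) (hatom : CondAtomless F1 F2 P)
    (hA : MeasurableSet[F2] A) (n : ℕ) :
    ∃ B, MeasurableSet[F2] B ∧ B ⊆ A ∧ ∀ᵐ ω ∂P,
      (0 < cexpInd F1 F2 P A ω → 0 < cexpInd F1 F2 P B ω) ∧
        cexpInd F1 F2 P B ω ≤ cexpInd F1 F2 P A ω / 2 ^ n := by
  induction n with
  | zero => exact ⟨A, hA, subset_rfl, .of_forall fun ω => ⟨id, by simp⟩⟩
  | succ n ih =>
    obtain ⟨B, hB, hBA, hBae⟩ := ih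
    obtain ⟨B', hB', hB'B, hB'ae⟩ := hatom.exists_subset_cexpInd_le_half hle hB
    refine ⟨B', hB', hB'B.trans hBA, ?_⟩
    filter_upwards [hBae, hB'ae] with ω h h'
    refine ⟨fun hA0 => h'.1 (h.1 hA0), ?_⟩
    rw [pow_succ, ← div_div]
    linarith [h'.2, h.2]

lemma CondAtomless.exists_subset_cexpInd_le (hle : F1 ≤ F2) (hatom : CondAtomless F1 F2 P)
    (hA : MeasurableSet[F2] A) {ε : ℝ} (hε : 0 < ε) :
    ∃ B, MeasurableSet[F2] B ∧ B ⊆ A ∧ ∀ᵐ ω ∂P,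
      (0 < cexpInd F1 F2 P A ω → 0 < cexpInd F1 F2 P B ω) ∧ cexpInd F1 F2 P B ω ≤ ε := by
  obtain ⟨n, hn⟩ := exists_pow_lt_of_lt_one hε one_half_lt_one
  obtain ⟨B, hB, hBA, hBae⟩ := hatom.exists_subset_cexpInd_le_div_pow hle hA n
  refine ⟨B, hB, hBA, ?_⟩
  filter_upwards [hBae, cexpInd_le_one (F1 := F1) (P := P) hle hA] with ω h h1
  refine ⟨h.1, h.2.trans (le_of_lt ?_)⟩
  calc cexpInd F1 F2 P A ω / 2 ^ n ≤ 1 / 2 ^ n := by gcongr; exact h1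
    _ = (1 / 2) ^ n := by rw [one_div_pow]
    _ < ε := hn

end Atomless

section Exhaustion

variable {Ω : Type*} {F1 F2 : MeasurableSpace Ω} {P : @Measure Ω F2} [IsFiniteMeasure P]
  {A M : Set Ω} {r : Ω → ℝ}

lemma exists_measure_one_div_le_pos {α : Type*} [MeasurableSpace α] {μ : Measure α} {g : α → ℝ}
    (h : μ {x | 0 < g x} ≠ 0) : ∃ n : ℕ, 0 < μ {x | 1 / ((n : ℝ) + 1) ≤ g x} := by
  refine exists_measure_pos_of_not_measure_iUnion_null (h ∘ measure_mono_null fun x hx => ?_)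
  obtain ⟨n, hn⟩ := exists_nat_one_div_lt (show 0 < g x from hx)
  exact mem_iUnion.2 ⟨n, hn.le⟩

lemma CondAtomless.exists_superset_measure_lt (hle : F1 ≤ F2) (hatom : CondAtomless F1 F2 P)
    (hA : MeasurableSet[F2] A) (hr : Measurable[F1] r) (hrA : r ≤ᵐ[P] cexpInd F1 F2 P A)
    (hM : MeasurableSet[F2] M) (hMA : M ⊆ A) (hMr : cexpInd F1 F2 P M ≤ᵐ[P] r)
    (hS : P {ω | cexpInd F1 F2 P M ω < r ω} ≠ 0) :
    ∃ M', MeasurableSet[F2] M' ∧ M ⊆ M' ∧ M' ⊆ A ∧ cexpInd F1 F2 P M' ≤ᵐ[P] r ∧ P M < P M' := by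
  have hfM : Measurable[F1] (cexpInd F1 F2 P M) := (stronglyMeasurable_cexpInd M).measurable
  obtain ⟨n, hn⟩ := exists_measure_one_div_le_pos (μ := P) (g := fun ω => r ω - cexpInd F1 F2 P M ω)
    (by simpa only [sub_pos] using hS)
  -- fill the room left below `r` on `T` with a small piece of `A \ M`
  set T := {ω | 1 / ((n : ℝ) + 1) ≤ r ω - cexpInd F1 F2 P M ω}
  have hT : MeasurableSet[F1] T := measurableSet_le measurable_const (hr.sub hfM)
  have hA' : MeasurableSet[F2] ((A \ M) ∩ T) := (hA.diff hM).inter (hle _ hT)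
  obtain ⟨B, hB, hBA', hBae⟩ := hatom.exists_subset_cexpInd_le hle hA' (ε := 1 / ((n : ℝ) + 1))
    Nat.one_div_pos_of_nat
  have hBT : cexpInd F1 F2 P B =ᵐ[P] T.indicator (cexpInd F1 F2 P B) := by
    simpa only [inter_eq_left.2 (hBA'.trans inter_subset_right)] using cexpInd_inter (P := P) hB hT
  have hdisj : Disjoint M B := disjoint_left.2 fun ω hωM hωB => (hBA' hωB).1.2 hωM
  refine ⟨M ∪ B, hM.union hB, subset_union_left,
    union_subset hMA fun ω hω => (hBA' hω).1.1, ?_, ?_⟩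
  · filter_upwards [cexpInd_union (F1 := F1) (P := P) hM hB hdisj, hBT, hBae, hMr]
      with ω hU hBω hBle hMω
    rw [hU, Pi.add_apply, hBω]
    by_cases hωT : ω ∈ T
    · have hroom : 1 / ((n : ℝ) + 1) ≤ r ω - cexpInd F1 F2 P M ω := hωT
      rw [indicator_of_mem hωT]
      linarith [hBle.2]
    · simpa [indicator_of_notMem hωT] using hMω
  · have hA'pos : ∀ᵐ ω ∂P, ω ∈ T → 0 < cexpInd F1 F2 P ((A \ M) ∩ T) ω := by
      filter_upwards [cexpInd_inter (P := P) (hA.diff hM) hT,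
        cexpInd_diff (F1 := F1) (P := P) hA hM hMA, hrA] with ω hA'ω hdiff hrω hωT
      have hroom : 1 / ((n : ℝ) + 1) ≤ r ω - cexpInd F1 F2 P M ω := hωT
      rw [hA'ω, indicator_of_mem hωT, hdiff, Pi.sub_apply]
      linarith [Nat.one_div_pos_of_nat (α := ℝ) (n := n)]
    have hpos : 0 < P (B ∩ T) := measure_inter_pos_of_cexpInd_pos hle hB hT hn.ne' (by
      filter_upwards [hA'pos, hBae] with ω hA'ω hBω hω
      exact hBω.1 (hA'ω hω))
    rw [measure_union hdisj hB]
    exact ENNReal.lt_add_right (measure_ne_top P M)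
      (hpos.trans_le (measure_mono inter_subset_left)).ne'

theorem CondAtomless.exists_subset_cexpInd_eq (hle : F1 ≤ F2) (hatom : CondAtomless F1 F2 P)
    (hA : MeasurableSet[F2] A) (hr : Measurable[F1] r) (hr0 : 0 ≤ᵐ[P] r)
    (hrA : r ≤ᵐ[P] cexpInd F1 F2 P A) :
    ∃ B, MeasurableSet[F2] B ∧ B ⊆ A ∧ cexpInd F1 F2 P B =ᵐ[P] r := by
  set G := {B | MeasurableSet[F2] B ∧ B ⊆ A ∧ cexpInd F1 F2 P B ≤ᵐ[P] r}
  have hseq : ∀ M : ℕ → Set Ω, Monotone M → (∀ k, M k ∈ G) → ∃ U ∈ G, ∀ k, M k ⊆ U := by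
    intro M hmono hMG
    refine ⟨⋃ k, M k, ⟨.iUnion fun k => (hMG k).1, iUnion_subset fun k => (hMG k).2.1, ?_⟩,
      subset_iUnion M⟩
    filter_upwards [tendsto_cexpInd_iUnion hle (fun k => (hMG k).1) hmono,
      ae_all_iff.2 fun k => (hMG k).2.2] with ω hlim hle_r
    exact le_of_tendsto' hlim hle_r
  have hempty : ∅ ∈ G := ⟨.empty, empty_subset A, by simpa using hr0⟩
  obtain ⟨M, ⟨hM, hMA, hMr⟩, hmax⟩ := exists_maximal_of_seq_bounded (G := G) P.real
    (fun _ _ h => measureReal_mono h) ⟨P.real univ, by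
      rintro _ ⟨B, -, rfl⟩; exact measureReal_mono (subset_univ B)⟩ ⟨∅, hempty⟩ hseq
  refine ⟨M, hM, hMA, ?_⟩
  by_contra hne
  have hS : P {ω | cexpInd F1 F2 P M ω < r ω} ≠ 0 := fun h0 => hne (by
    filter_upwards [hMr, measure_eq_zero_iff_ae_notMem.1 h0] with ω h1 h2
    exact le_antisymm h1 (not_lt.1 h2))
  obtain ⟨M', hM', hMM', hM'A, hM'r, hlt⟩ :=
    hatom.exists_superset_measure_lt hle hA hr hrA hM hMA hMr hS
  exact not_lt.2 (hmax M' ⟨hM', hM'A, hM'r⟩ hMM')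
    ((ENNReal.toReal_lt_toReal (measure_ne_top P M) (measure_ne_top P M')).2 hlt)

theorem CondAtomless.exists_between_cexpInd_eq (hle : F1 ≤ F2) (hatom : CondAtomless F1 F2 P)
    {D₁ D₂ : Set Ω} (hD₁ : MeasurableSet[F2] D₁) (hD₂ : MeasurableSet[F2] D₂) (hD : D₁ ⊆ D₂)
    (hr : Measurable[F1] r) (h₁ : cexpInd F1 F2 P D₁ ≤ᵐ[P] r) (h₂ : r ≤ᵐ[P] cexpInd F1 F2 P D₂) :
    ∃ E, MeasurableSet[F2] E ∧ D₁ ⊆ E ∧ E ⊆ D₂ ∧ cexpInd F1 F2 P E =ᵐ[P] r := by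
  have hdiff := cexpInd_diff (F1 := F1) (P := P) hD₂ hD₁ hD
  obtain ⟨B, hB, hBD, hBr⟩ := hatom.exists_subset_cexpInd_eq hle (hD₂.diff hD₁)
    (hr.sub (stronglyMeasurable_cexpInd D₁).measurable)
    (by filter_upwards [h₁] with ω hω using sub_nonneg.2 hω)
    (by filter_upwards [h₂, hdiff] with ω hω hdω using by rw [hdω]; exact sub_le_sub_right hω _)
  have hdisj : Disjoint D₁ B := disjoint_left.2 fun ω hω hωB => (hBD hωB).2 hω
  refine ⟨D₁ ∪ B, hD₁.union hB, subset_union_left, union_subset hD (hBD.trans sdiff_subset), ?_⟩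
  filter_upwards [cexpInd_union (F1 := F1) (P := P) hD₁ hB hdisj, hBr] with ω hU hBω
  rw [hU, Pi.add_apply, hBω, Pi.sub_apply, add_sub_cancel]

end Exhaustion

section Dyadic

variable {Ω : Type*} {F1 F2 : MeasurableSpace Ω} {P : @Measure Ω F2}

-- The values are capped at `1` so that the refinement step needs no case distinction on `k`.
structure IsDyadicChain (F1 F2 : MeasurableSpace Ω) (P : @Measure Ω F2) (n : ℕ)
    (C : ℕ → Set Ω) : Prop where
  monotone : Monotone C
  zero : C 0 = ∅
  two_pow : C (2 ^ n) = univ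
  measurableSet : ∀ k, MeasurableSet[F2] (C k)
  cexpInd_eq : ∀ k, cexpInd F1 F2 P (C k) =ᵐ[P] fun _ => min ((k : ℝ) / 2 ^ n) 1

lemma odd_div_two_pow_succ_mem_Icc (j n : ℕ) :
    ((2 * j + 1 : ℕ) : ℝ) / 2 ^ (n + 1) ∈ Icc ((j : ℝ) / 2 ^ n) (((j + 1 : ℕ) : ℝ) / 2 ^ n) := by
  rw [pow_succ', mem_Icc, div_le_div_iff₀ (by positivity) (by positivity),
    div_le_div_iff₀ (by positivity) (by positivity)]
  push_cast
  constructor <;> nlinarith [pow_pos (two_pos (α := ℝ)) n]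

variable [IsFiniteMeasure P]

lemma isDyadicChain_zero (hle : F1 ≤ F2) :
    IsDyadicChain F1 F2 P 0 fun k => if k = 0 then ∅ else univ where
  monotone i j hij := by
    by_cases hi : i = 0
    · simp [hi]
    · simp [hi, show j ≠ 0 by omega]
  zero := by simp
  two_pow := by simp
  measurableSet k := by split_ifs <;> simp
  cexpInd_eq k := by
    rcases Nat.eq_zero_or_pos k with rfl | hk
    · exact .of_forall fun _ => by simp
    · simp only [hk.ne', if_false, cexpInd_univ hle, pow_zero, div_one]
      exact .of_forall fun _ => (min_eq_right (Nat.one_le_cast.2 hk)).symm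

lemma IsDyadicChain.exists_refinement (hle : F1 ≤ F2) (hatom : CondAtomless F1 F2 P) {n : ℕ}
    {C : ℕ → Set Ω} (hC : IsDyadicChain F1 F2 P n C) :
    ∃ C', IsDyadicChain F1 F2 P (n + 1) C' ∧ ∀ k, C' (2 * k) = C k := by
  have hmid : ∀ j, ∃ E, MeasurableSet[F2] E ∧ C j ⊆ E ∧ E ⊆ C (j + 1) ∧
      cexpInd F1 F2 P E =ᵐ[P] fun _ => min (((2 * j + 1 : ℕ) : ℝ) / 2 ^ (n + 1)) 1 := by
    intro j
    have hj := odd_div_two_pow_succ_mem_Icc j n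
    refine hatom.exists_between_cexpInd_eq hle (hC.measurableSet j) (hC.measurableSet (j + 1))
      (hC.monotone j.le_succ) measurable_const ?_ ?_
    · filter_upwards [hC.cexpInd_eq j] with ω hω
      exact hω.trans_le (min_le_min_right 1 hj.1)
    · filter_upwards [hC.cexpInd_eq (j + 1)] with ω hω
      exact (min_le_min_right 1 hj.2).trans hω.ge
  choose E hE hCE hEC hEval using hmid
  refine ⟨interleave C E, ⟨monotone_interleave hCE hEC, ?_, ?_, ?_, fun k => ?_⟩,
    interleave_two_mul C E⟩
  · simpa using interleave_two_mul C E 0 ▸ hC.zero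
  · rw [pow_succ', interleave_two_mul, hC.two_pow]
  · intro k
    obtain ⟨j, rfl | rfl⟩ := Nat.even_or_odd' k
    · simpa using hC.measurableSet j
    · simpa using hE j
  · obtain ⟨j, rfl | rfl⟩ := Nat.even_or_odd' k
    · have hval : 2 * (j : ℝ) / 2 ^ (n + 1) = j / 2 ^ n := by
        rw [pow_succ', mul_div_mul_left _ _ two_ne_zero]
      simpa [hval] using hC.cexpInd_eq j
    · simpa using hEval j

lemma CondAtomless.exists_isDyadicChain (hle : F1 ≤ F2) (hatom : CondAtomless F1 F2 P) :
    ∃ C : ℕ → ℕ → Set Ω, (∀ n, IsDyadicChain F1 F2 P n (C n)) ∧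
      ∀ n k, C (n + 1) (2 * k) = C n k := by
  choose next hnext hcompat using
    fun n (C : {C // IsDyadicChain F1 F2 P n C}) => C.2.exists_refinement hle hatom
  let C : ∀ n, {C // IsDyadicChain F1 F2 P n C} := fun n =>
    Nat.rec ⟨_, isDyadicChain_zero hle⟩ (fun n C => ⟨next n C, hnext n C⟩) n
  exact ⟨fun n => (C n).1, fun n => (C n).2, fun n => hcompat n (C n)⟩

end Dyadic

section DyadicUnion

variable {Ω : Type*} {C : ℕ → ℕ → Set Ω}

def dyadicUnion (C : ℕ → ℕ → Set Ω) (t : ℝ) : Set Ω := ⋃ n, C n ⌊t * 2 ^ n⌋₊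

lemma monotone_dyadicUnion (hC : ∀ n, Monotone (C n)) : Monotone (dyadicUnion C) :=
  fun _ _ hst => iUnion_mono fun n => hC n (Nat.floor_le_floor (by gcongr))

lemma dyadicUnion_zero (hC : ∀ n, C n 0 = ∅) : dyadicUnion C 0 = ∅ := by
  simp [dyadicUnion, hC]

lemma dyadicUnion_one (hC : C 0 1 = univ) : dyadicUnion C 1 = univ :=
  eq_univ_of_univ_subset <| calc
    univ = C 0 ⌊(1 : ℝ) * 2 ^ 0⌋₊ := by simp [hC]
    _ ⊆ dyadicUnion C 1 := subset_iUnion (fun n => C n ⌊(1 : ℝ) * 2 ^ n⌋₊) 0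

lemma monotone_dyadicUnion_approx (hC : ∀ n, Monotone (C n))
    (hcompat : ∀ n k, C (n + 1) (2 * k) = C n k) {t : ℝ} (ht : 0 ≤ t) :
    Monotone fun n => C n ⌊t * 2 ^ n⌋₊ := by
  refine monotone_nat_of_le_succ fun n => ?_
  rw [← hcompat]
  refine hC (n + 1) (Nat.le_floor ?_)
  rw [pow_succ]
  push_cast
  linarith [Nat.floor_le (show 0 ≤ t * 2 ^ n by positivity)]

variable {F1 F2 : MeasurableSpace Ω} {P : @Measure Ω F2} [IsFiniteMeasure P]

lemma cexpInd_dyadicUnion (hle : F1 ≤ F2) (hC : ∀ n, IsDyadicChain F1 F2 P n (C n))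
    (hcompat : ∀ n k, C (n + 1) (2 * k) = C n k) {t : ℝ} (ht : t ∈ Icc (0 : ℝ) 1) :
    cexpInd F1 F2 P (dyadicUnion C t) =ᵐ[P] fun _ => t := by
  have hlim : Tendsto (fun n : ℕ => min ((⌊t * 2 ^ n⌋₊ : ℝ) / 2 ^ n) 1) atTop (𝓝 t) := by
    simpa [min_eq_left ht.2] using ((tendsto_nat_floor_mul_div_atTop ht.1).comp
      (tendsto_pow_atTop_atTop_of_one_lt one_lt_two)).min (tendsto_const_nhds (x := (1 : ℝ)))
  filter_upwards [tendsto_cexpInd_iUnion hle (fun n => (hC n).measurableSet _)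
      (monotone_dyadicUnion_approx (fun n => (hC n).monotone) hcompat ht.1),
    ae_all_iff.2 fun n => (hC n).cexpInd_eq ⌊t * 2 ^ n⌋₊] with ω hω hval
  exact tendsto_nhds_unique hω (by simpa only [hval] using hlim)

end DyadicUnion

theorem indep_generateFrom_of_cexpInd_eq_const {Ω : Type*} {F1 F2 : MeasurableSpace Ω}
    {P : @Measure Ω F2} [IsProbabilityMeasure P] (hle : F1 ≤ F2) {p : Set (Set Ω)}
    (hp : IsPiSystem p) (hpm : ∀ s ∈ p, MeasurableSet[F2] s)
    (hc : ∀ s ∈ p, ∃ c : ℝ, cexpInd F1 F2 P s =ᵐ[P] fun _ => c) :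
    Indep (MeasurableSpace.generateFrom p) F1 P := by
  refine IndepSets.indep (MeasurableSpace.generateFrom_le hpm) hle hp
    (@MeasurableSpace.isPiSystem_measurableSet Ω F1) rfl
    (@MeasurableSpace.generateFrom_measurableSet Ω F1).symm
    (IndepSets_iff _ _ _ |>.2 fun s T hs hT => ?_)
  obtain ⟨c, hc⟩ := hc s hs
  have hreal : ∀ T, MeasurableSet[F1] T → P.real (s ∩ T) = c * P.real T := fun T hT => by
    rw [← setIntegral_cexpInd hle (hpm s hs) hT, setIntegral_congr_ae (hle _ hT)
      (hc.mono fun _ h _ => h), setIntegral_const, smul_eq_mul, mul_comm]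
  have hs_real : P.real s = c := by simpa using hreal univ .univ
  apply (ENNReal.toReal_eq_toReal_iff' (measure_ne_top P _)
    (ENNReal.mul_ne_top (measure_ne_top P _) (measure_ne_top P _))).1
  rw [ENNReal.toReal_mul]
  simp only [← Measure.real_def, hreal T hT, hs_real]

theorem stmt2 {Ω : Type*} (F1 F2 : MeasurableSpace Ω) (hle : F1 ≤ F2)
    (P : @Measure Ω F2) (hP : @IsProbabilityMeasure Ω F2 P)
    (hatomless : CondAtomless F1 F2 P) :
    ∃ B : ℝ → Set Ω,
      (∀ s ∈ Set.Icc (0 : ℝ) 1, ∀ t ∈ Set.Icc (0 : ℝ) 1, s ≤ t → B s ⊆ B t) ∧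
      B 0 = ∅ ∧ B 1 = Set.univ ∧
      (∀ t ∈ Set.Icc (0 : ℝ) 1, MeasurableSet[F2] (B t)) ∧
      (∀ t ∈ Set.Icc (0 : ℝ) 1, cexpInd F1 F2 P (B t) =ᵐ[P] fun _ => t) ∧
      ProbabilityTheory.Indep
        (MeasurableSpace.generateFrom {S : Set Ω | ∃ t ∈ Set.Icc (0 : ℝ) 1, S = B t})
        F1 P := by
  obtain ⟨C, hC, hcompat⟩ := hatomless.exists_isDyadicChain hle
  have hmono : Monotone (dyadicUnion C) := monotone_dyadicUnion fun n => (hC n).monotone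
  have hmeas : ∀ t, MeasurableSet[F2] (dyadicUnion C t) :=
    fun t => .iUnion fun n => (hC n).measurableSet _
  have hval : ∀ t ∈ Icc (0 : ℝ) 1, cexpInd F1 F2 P (dyadicUnion C t) =ᵐ[P] fun _ => t :=
    fun t ht => cexpInd_dyadicUnion hle hC hcompat ht
  refine ⟨dyadicUnion C, fun s _ t _ hst => hmono hst, dyadicUnion_zero fun n => (hC n).zero,
    dyadicUnion_one (by simpa using (hC 0).two_pow), fun t _ => hmeas t, hval, ?_⟩
  exact indep_generateFrom_of_cexpInd_eq_const hle (isPiSystem_of_monotone hmono _)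
    (by rintro _ ⟨t, -, rfl⟩; exact hmeas t) (by rintro _ ⟨t, ht, rfl⟩; exact ⟨t, hval t ht⟩)
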